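/- arXiv:0905.4648 — 5 statements merged into one kernel-verified Lean document; each statement's English description precedes it below -/
import Mathlib

section
/- Let n ≥ 1 be odd and F a field. Let A be the (n+1)×(n+1) matrix over F with entries A_{ij} = -1 for i < j, A_{ij} = 1 for i > j, and A_{ii} = 0. Then A is invertible, and its inverse is the matrix B with entries B_{ij} = (-1)^{i+j+1} for i < j, B_{ij} = (-1)^{i+j} for i > j, and B_{ii} = 0. -/
private def aaF (F : Type*) [Field F] (i j : ℕ) : F :=
  if i < j then -1 else if j < i then 1 else 0

private lemma sum_neg_one_Ico (F : Type*) [Field F] {a b : ℕ} (h : a ≤ b) :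
    ∑ j ∈ Finset.Ico a b, (-1 : F) ^ j =
      (if Even b then 0 else 1) - (if Even a then 0 else 1) := by
  rw [Finset.sum_Ico_eq_sub _ h, neg_one_geom_sum, neg_one_geom_sum]

private lemma E_add (F : Type*) [Field F] (m : ℕ) :
    (if Even m then (0 : F) else 1) + (if Even (m + 1) then (0 : F) else 1) = 1 := by
  rcases Nat.even_or_odd m with h | h
  · rw [if_pos h, if_neg (Nat.not_even_iff_odd.mpr (Even.add_one h))]; ring
  · rw [if_neg (Nat.not_even_iff_odd.mpr h), if_pos (Odd.add_one h)]; ring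

private lemma T_eq (F : Type*) [Field F] (n i k : ℕ) (hodd : Odd n) (hik : i < k) (hk : k ≤ n) :
    ∑ j ∈ Finset.range (n + 1), (-1 : F) ^ j * aaF F i j * aaF F k j = 0 := by
  have hi1 : i < n + 1 := by omega
  have hk1 : k < n + 1 := by omega
  rw [Finset.range_eq_Ico,
    ← Finset.sum_Ico_consecutive _ (Nat.zero_le i) (le_of_lt hi1),
    Finset.sum_eq_sum_Ico_succ_bot hi1,
    ← Finset.sum_Ico_consecutive _ (by omega : i + 1 ≤ k) (le_of_lt hk1),
    Finset.sum_eq_sum_Ico_succ_bot hk1]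
  have e1 : ∀ j ∈ Finset.Ico 0 i, (-1 : F) ^ j * aaF F i j * aaF F k j = (-1) ^ j := by
    intro j hj
    simp only [Finset.mem_Ico] at hj
    unfold aaF
    rw [if_neg (by omega : ¬ i < j), if_pos hj.2, if_neg (by omega : ¬ k < j),
      if_pos (by omega : j < k)]
    ring
  have e2 : ∀ j ∈ Finset.Ico (i + 1) k, (-1 : F) ^ j * aaF F i j * aaF F k j = -(-1) ^ j := by
    intro j hj
    simp only [Finset.mem_Ico] at hj
    unfold aaF
    rw [if_pos (by omega : i < j), if_neg (by omega : ¬ k < j), if_pos hj.2]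
    ring
  have e3 : ∀ j ∈ Finset.Ico (k + 1) (n + 1), (-1 : F) ^ j * aaF F i j * aaF F k j = (-1) ^ j := by
    intro j hj
    simp only [Finset.mem_Ico] at hj
    unfold aaF
    rw [if_pos (by omega : i < j), if_pos (by omega : k < j)]
    ring
  have hii : aaF F i i = 0 := by simp [aaF]
  have hkk : aaF F k k = 0 := by simp [aaF]
  rw [Finset.sum_congr rfl e1, Finset.sum_congr rfl e2, Finset.sum_congr rfl e3, hii, hkk]
  rw [Finset.sum_neg_distrib]
  simp only [sum_neg_one_Ico F (Nat.zero_le i), sum_neg_one_Ico F (by omega : i + 1 ≤ k),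
    sum_neg_one_Ico F (by omega : k + 1 ≤ n + 1)]
  rw [if_pos (Even.zero), if_pos (Odd.add_one hodd)]
  linear_combination (E_add F i) - (E_add F k)

private lemma T_diag (F : Type*) [Field F] (n i : ℕ) (hodd : Odd n) (hi : i ≤ n) :
    ∑ j ∈ Finset.range (n + 1), (-1 : F) ^ j * aaF F i j * aaF F i j = -(-1) ^ i := by
  have e : ∀ j ∈ Finset.range (n + 1), (-1 : F) ^ j * aaF F i j * aaF F i j
      = (-1) ^ j - (if j = i then (-1 : F) ^ i else 0) := by
    intro j _
    rcases lt_trichotomy i j with h | h | h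
    · unfold aaF
      rw [if_pos h, if_neg (by omega : ¬ (j = i))]
      ring
    · unfold aaF
      rw [if_neg (by omega : ¬ i < j), if_neg (by omega : ¬ j < i), if_pos (by omega : j = i), h]
      ring
    · unfold aaF
      rw [if_neg (by omega : ¬ i < j), if_pos h, if_neg (by omega : ¬ (j = i))]
      ring
  rw [Finset.sum_congr rfl e, Finset.sum_sub_distrib, neg_one_geom_sum,
    Finset.sum_ite_eq' _ i, if_pos (Finset.mem_range.mpr (by omega)),
    if_pos (Odd.add_one hodd)]
  ring

/-- The matrix of the null polarity: `-1` above the diagonal, `1` below, `0` on it. -/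
def moebiusA (F : Type*) [Field F] (n : ℕ) : Matrix (Fin (n + 1)) (Fin (n + 1)) F :=
  fun i j => if i < j then -1 else if j < i then 1 else 0

/-- The claimed inverse matrix: `(-1)^(i+j+1)` above the diagonal, `(-1)^(i+j)` below, `0` on it. -/
def moebiusB (F : Type*) [Field F] (n : ℕ) : Matrix (Fin (n + 1)) (Fin (n + 1)) F :=
  fun i j =>
    if i < j then (-1 : F) ^ ((i : ℕ) + (j : ℕ) + 1)
    else if j < i then (-1 : F) ^ ((i : ℕ) + (j : ℕ))
    else 0

private lemma mA_eq (F : Type*) [Field F] (n : ℕ) (i j : Fin (n + 1)) :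
    moebiusA F n i j = aaF F (i : ℕ) (j : ℕ) := by
  simp only [moebiusA, aaF, Fin.lt_def]

private lemma mB_eq (F : Type*) [Field F] (n : ℕ) (j k : Fin (n + 1)) :
    moebiusB F n j k = (-1 : F) ^ ((j : ℕ) + (k : ℕ) + 1) * aaF F (k : ℕ) (j : ℕ) := by
  simp only [moebiusB, aaF, Fin.lt_def]
  rcases lt_trichotomy ((j : ℕ)) ((k : ℕ)) with h | h | h
  · simp only [if_pos h, if_neg (by omega : ¬ (k : ℕ) < (j : ℕ))]
    ring
  · simp only [if_neg (by omega : ¬ (j : ℕ) < (k : ℕ)), if_neg (by omega : ¬ (k : ℕ) < (j : ℕ))]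
    ring
  · simp only [if_neg (by omega : ¬ (j : ℕ) < (k : ℕ)), if_pos h]
    rw [pow_succ]
    ring

theorem stmt_0 (F : Type*) [Field F] (n : ℕ) (hn1 : 1 ≤ n) (hodd : Odd n) :
    IsUnit (moebiusA F n) ∧ (moebiusA F n)⁻¹ = moebiusB F n := by
  have hAB : moebiusA F n * moebiusB F n = 1 := by
    ext i k
    rw [Matrix.mul_apply, Matrix.one_apply]
    have hterm : ∀ j : Fin (n + 1), moebiusA F n i j * moebiusB F n j k
        = (-1 : F) ^ ((k : ℕ) + 1) *
          ((-1 : F) ^ (j : ℕ) * aaF F (i : ℕ) (j : ℕ) * aaF F (k : ℕ) (j : ℕ)) := by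
      intro j
      rw [mA_eq, mB_eq, add_assoc, pow_add]
      ring
    simp only [hterm]
    rw [← Finset.mul_sum,
      Fin.sum_univ_eq_sum_range
        (fun m => (-1 : F) ^ m * aaF F (i : ℕ) m * aaF F (k : ℕ) m) (n + 1)]
    by_cases h : i = k
    · subst h
      rw [T_diag F n (i : ℕ) hodd (by omega : (i : ℕ) ≤ n), if_pos rfl,
        show -(-1 : F) ^ (i : ℕ) = (-1 : F) ^ ((i : ℕ) + 1) by rw [pow_succ]; ring,
        ← pow_add, show (i : ℕ) + 1 + ((i : ℕ) + 1) = 2 * ((i : ℕ) + 1) by ring,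
        pow_mul, neg_one_sq, one_pow]
    · rw [if_neg h]
      have hv : (i : ℕ) ≠ (k : ℕ) := fun hv => h (Fin.ext hv)
      rcases lt_or_gt_of_ne hv with hlt | hgt
      · rw [T_eq F n (i : ℕ) (k : ℕ) hodd hlt (by omega : (k : ℕ) ≤ n)]
        ring
      · rw [Finset.sum_congr rfl
          (fun m _ => by ring :
            ∀ m ∈ Finset.range (n + 1),
              (-1 : F) ^ m * aaF F (i : ℕ) m * aaF F (k : ℕ) m
                = (-1 : F) ^ m * aaF F (k : ℕ) m * aaF F (i : ℕ) m),
          T_eq F n (k : ℕ) (i : ℕ) hodd hgt (by omega : (i : ℕ) ≤ n)]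
        ring
  have := invertibleOfRightInverse _ _ hAB
  exact ⟨isUnit_of_invertible _, Matrix.inv_eq_right_inv hAB⟩
end

section
/- Let n ≥ 3 be odd and F a field. Let A be the (n+1)×(n+1) matrix over F with entries -1 above the diagonal, 1 below the diagonal, 0 on the diagonal, and let B(x,y) = xᵀAy be the associated nondegenerate alternating bilinear form on F^{n+1}. Let k be odd with 1 ≤ k ≤ n, let 0 ≤ j_0 < j_1 < ... < j_k ≤ n be distinct indices, and let S be the linear span of the standard basis vectors e_{j_0}, e_{j_1}, ..., e_{j_k}. Then S ∩ S^⊥ = {0}, where S^⊥ = { y ∈ F^{n+1} : B(s,y) = 0 for all s ∈ S }. -/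
open Matrix

theorem stmt_2 (F : Type*) [Field F] (n : ℕ) (hn : 3 ≤ n) (hodd : Odd n)
    (k : ℕ) (hk : Odd k) (hk1 : 1 ≤ k) (hkn : k ≤ n)
    (j : Fin (k + 1) → Fin (n + 1)) (hj : StrictMono j)
    (S : Submodule F (Fin (n + 1) → F))
    (hS : S = Submodule.span F (Set.range fun i : Fin (k + 1) => Pi.single (j i) (1 : F))) :
    ∀ y ∈ S, (∀ s ∈ S, s ⬝ᵥ (moebiusA F n) *ᵥ y = 0) → y = 0 := by
  intro y hy hperp
  subst hS
  rw [Submodule.mem_span_range_iff_exists_fun] at hy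
  obtain ⟨c, hc⟩ := hy
  have hB : ∀ a : Fin (k+1), (Pi.single (j a) (1:F) : Fin (n+1) → F) ∈
      Submodule.span F (Set.range fun i : Fin (k + 1) => Pi.single (j i) (1 : F)) :=
    fun a => Submodule.subset_span ⟨a, rfl⟩
  -- the key system of equations
  have key : ∀ a : Fin (k+1), ∑ i : Fin (k+1),
      c i * (if (a:ℕ) < (i:ℕ) then (-1:F) else if (i:ℕ) < (a:ℕ) then 1 else 0) = 0 := by
    intro a
    have h := hperp _ (hB a)
    rw [← hc] at h
    rw [single_dotProduct, one_mul] at h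
    have expand : (moebiusA F n *ᵥ (∑ i : Fin (k+1), c i • (Pi.single (j i) (1:F) : Fin (n+1) → F))) (j a)
        = ∑ i : Fin (k+1), c i * moebiusA F n (j a) (j i) := by
      simp only [mulVec, dotProduct, Finset.sum_apply, Pi.smul_apply, Pi.single_apply,
        smul_eq_mul, Finset.mul_sum]
      rw [Finset.sum_comm]
      refine Finset.sum_congr rfl fun i _ => ?_
      rw [Finset.sum_congr rfl (fun x _ => ?_), Finset.sum_ite_eq' Finset.univ (j i)
        (fun x => moebiusA F n (j a) x * c i)]
      · simp [mul_comm]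
      · rw [mul_ite, mul_ite, mul_one, mul_zero, mul_zero]
    rw [expand] at h
    refine Eq.trans (Finset.sum_congr rfl fun i _ => ?_) h
    congr 1
    simp only [moebiusA]
    rcases lt_trichotomy (a:ℕ) (i:ℕ) with h1 | h1 | h1
    · rw [if_pos h1, if_pos (hj (Fin.lt_def.mpr h1))]
    · have : a = i := Fin.ext h1
      subst this; simp
    · rw [if_neg (by omega), if_pos h1,
        if_neg (fun hlt => absurd (hj.lt_iff_lt.mp hlt) (by omega)),
        if_pos (hj (Fin.lt_def.mpr h1))]
  -- consecutive relation : c (a+1) = - c a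
  have crec : ∀ a : ℕ, (ha : a < k) → c ⟨a+1, by omega⟩ = - c ⟨a, by omega⟩ := by
    intro a ha
    have h1 := key ⟨a, by omega⟩
    have h2 := key ⟨a+1, by omega⟩
    have hsub : ∑ i : Fin (k+1),
        (c i * (if (a+1:ℕ) < (i:ℕ) then (-1:F) else if (i:ℕ) < (a+1:ℕ) then 1 else 0)
         - c i * (if (a:ℕ) < (i:ℕ) then (-1:F) else if (i:ℕ) < (a:ℕ) then 1 else 0))
        = 0 := by
      rw [Finset.sum_sub_distrib, h1, h2, sub_zero]
    have hterm : ∀ i : Fin (k+1),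
        (c i * (if (a+1:ℕ) < (i:ℕ) then (-1:F) else if (i:ℕ) < (a+1:ℕ) then 1 else 0)
         - c i * (if (a:ℕ) < (i:ℕ) then (-1:F) else if (i:ℕ) < (a:ℕ) then 1 else 0))
        = (if i = (⟨a, by omega⟩ : Fin (k+1)) then c i else 0)
          + (if i = (⟨a+1, by omega⟩ : Fin (k+1)) then c i else 0) := by
      intro i
      rcases Nat.lt_trichotomy (i:ℕ) a with h1 | h1 | h1
      · rw [if_neg (by omega), if_pos (by omega), if_neg (by omega), if_pos h1,
          if_neg (by simp [Fin.ext_iff]; omega), if_neg (by simp [Fin.ext_iff]; omega)]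
        ring
      · rw [if_neg (by omega), if_pos (by omega), if_neg (by omega), if_neg (by omega),
          if_pos (by simp [Fin.ext_iff]; omega), if_neg (by simp [Fin.ext_iff]; omega)]
        ring
      · rcases Nat.lt_or_ge (a+1) (i:ℕ) with h2 | h2
        · rw [if_pos h2, if_pos (by omega),
            if_neg (by simp [Fin.ext_iff]; omega), if_neg (by simp [Fin.ext_iff]; omega)]
          ring
        · have : (i:ℕ) = a+1 := by omega
          rw [if_neg (by omega), if_neg (by omega), if_pos (by omega),
            if_neg (by simp [Fin.ext_iff]; omega), if_pos (by simp [Fin.ext_iff]; omega)]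
          ring
    rw [Finset.sum_congr rfl (fun i _ => hterm i), Finset.sum_add_distrib,
      Finset.sum_ite_eq' Finset.univ _ c, Finset.sum_ite_eq' Finset.univ _ c,
      if_pos (Finset.mem_univ _), if_pos (Finset.mem_univ _)] at hsub
    exact eq_neg_of_add_eq_zero_right hsub
  -- closed form
  have cform : ∀ m : ℕ, (hm : m < k+1) → c ⟨m, hm⟩ = (-1)^m * c ⟨0, by omega⟩ := by
    intro m
    induction m with
    | zero => intro hm; simp
    | succ p ih =>
      intro hm
      rw [crec p (by omega), ih (by omega)]
      ring
  -- the equation at a = 0 gives  ∑ c i = c 0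
  have h0 := key ⟨0, by omega⟩
  have hterm0 : ∀ i : Fin (k+1),
      c i * (if (0:ℕ) < (i:ℕ) then (-1:F) else if (i:ℕ) < 0 then 1 else 0)
      = - c i + (if i = (⟨0, by omega⟩ : Fin (k+1)) then c i else 0) := by
    intro i
    rcases Nat.eq_zero_or_pos (i:ℕ) with h1 | h1
    · rw [if_neg (by omega), if_neg (by omega), if_pos (Fin.ext h1)]
      ring
    · rw [if_pos h1, if_neg (fun h => by subst h; exact absurd h1 (lt_irrefl 0))]
      ring
  rw [Finset.sum_congr rfl (fun i _ => hterm0 i), Finset.sum_add_distrib,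
    Finset.sum_ite_eq' Finset.univ _ c, if_pos (Finset.mem_univ _), Finset.sum_neg_distrib] at h0
  -- compute the total sum using the closed form
  have hsum : ∑ i : Fin (k+1), c i = 0 := by
    have : ∀ i : Fin (k+1), c i = (-1:F)^(i:ℕ) * c ⟨0, by omega⟩ := fun i => by
      have := cform i (i.isLt); simpa using this
    rw [Finset.sum_congr rfl (fun i _ => this i), ← Finset.sum_mul,
      Fin.sum_univ_eq_sum_range (fun m => (-1:F)^m), neg_one_geom_sum,
      if_pos (by exact hk.add_one), zero_mul]
  rw [hsum, neg_zero, zero_add] at h0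
  -- so c 0 = 0 hence all c i = 0
  have hall : ∀ i : Fin (k+1), c i = 0 := by
    intro i
    have := cform i (i.isLt)
    simp only [Fin.eta] at this
    rw [this, h0, mul_zero]
  rw [← hc]
  exact Finset.sum_eq_zero fun i _ => by rw [hall i, zero_smul]
end

section
/- Let n ≥ 3 be odd and F a field. Let A be the (n+1)×(n+1) matrix over F with entries -1 above the diagonal, 1 below the diagonal, 0 on the diagonal, and let B(x,y) = xᵀAy be the associated alternating bilinear form on F^{n+1}. Let k be even with 2 ≤ k ≤ n-1, let 0 ≤ j_0 < j_1 < ... < j_k ≤ n be distinct indices, and let S be the linear span of e_{j_0}, e_{j_1}, ..., e_{j_k}. Then S ∩ S^⊥ is the one-dimensional subspace spanned by the vector Σ_{i=0}^{k} (-1)^{i+1} e_{j_i}, where S^⊥ = { y ∈ F^{n+1} : B(s,y) = 0 for all s ∈ S }. -/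
open Matrix

lemma aux_sum_chi (F : Type*) [Field F] (k a : ℕ) (hk : Even k) (ha : a ≤ k) :
    ∑ b ∈ Finset.range (k+1),
      (if a < b then (-1:F) else if b < a then 1 else 0) * (-1)^(b+1) = 0 := by
  rw [Finset.range_eq_Ico, ← Finset.sum_Ico_consecutive _ (Nat.zero_le (a+1)) (by omega : a+1 ≤ k+1)]
  have h1 : ∑ b ∈ Finset.Ico 0 (a+1),
      (if a < b then (-1:F) else if b < a then 1 else 0) * (-1)^(b+1)
      = -(if Even a then 0 else 1) := by
    rw [← Finset.range_eq_Ico, Finset.sum_range_succ]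
    simp only [lt_irrefl, if_false, zero_mul, add_zero]
    calc ∑ b ∈ Finset.range a, (if a < b then (-1:F) else if b < a then 1 else 0) * (-1)^(b+1)
        = ∑ b ∈ Finset.range a, -((-1:F)^b) := by
          refine Finset.sum_congr rfl fun b hb => ?_
          rw [Finset.mem_range] at hb
          rw [if_neg (by omega), if_pos hb, one_mul, pow_succ]; ring
      _ = -(if Even a then 0 else 1) := by rw [Finset.sum_neg_distrib, neg_one_geom_sum]
  have h2 : ∑ b ∈ Finset.Ico (a+1) (k+1),
      (if a < b then (-1:F) else if b < a then 1 else 0) * (-1)^(b+1)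
      = 1 - (if Even (a+1) then 0 else 1) := by
    calc ∑ b ∈ Finset.Ico (a+1) (k+1),
          (if a < b then (-1:F) else if b < a then 1 else 0) * (-1)^(b+1)
        = ∑ b ∈ Finset.Ico (a+1) (k+1), (-1:F)^b := by
          refine Finset.sum_congr rfl fun b hb => ?_
          rw [Finset.mem_Ico] at hb
          rw [if_pos (by omega), pow_succ]; ring
      _ = 1 - (if Even (a+1) then 0 else 1) := by
          rw [Finset.sum_Ico_eq_sub _ (by omega : a+1 ≤ k+1), neg_one_geom_sum, neg_one_geom_sum,
            if_neg (by simp [Nat.even_add_one, hk])]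
  rw [h1, h2]
  rcases Nat.even_or_odd a with h | h
  · simp [h, Nat.even_add_one]
  · simp [Nat.not_even_iff_odd.mpr h, Nat.even_add_one, Nat.not_even_iff_odd]

theorem stmt_3 (F : Type*) [Field F] (n : ℕ) (hn : 3 ≤ n) (hodd : Odd n)
    (k : ℕ) (hk : Even k) (hk2 : 2 ≤ k) (hkn : k ≤ n - 1)
    (j : Fin (k + 1) → Fin (n + 1)) (hj : StrictMono j)
    (S : Submodule F (Fin (n + 1) → F))
    (hS : S = Submodule.span F (Set.range fun i : Fin (k + 1) => Pi.single (j i) (1 : F))) :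
    {y | y ∈ S ∧ ∀ s ∈ S, s ⬝ᵥ (moebiusA F n) *ᵥ y = 0} =
      (Submodule.span F
        {∑ i : Fin (k + 1), ((-1 : F) ^ ((i : ℕ) + 1)) • (Pi.single (j i) (1 : F) : Fin (n + 1) → F)} :
        Set (Fin (n + 1) → F)) := by
  set v : Fin (k+1) → (Fin (n+1) → F) := fun i => Pi.single (j i) (1 : F) with hv
  set w : Fin (n+1) → F := ∑ i : Fin (k+1), ((-1:F)^((i:ℕ)+1)) • v i with hw
  have hBvv : ∀ a b : Fin (k+1), v a ⬝ᵥ moebiusA F n *ᵥ v b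
      = if (a:ℕ) < (b:ℕ) then (-1:F) else if (b:ℕ) < (a:ℕ) then 1 else 0 := by
    intro a b
    have hlt : ∀ a b : Fin (k+1), (j a < j b) ↔ ((a:ℕ) < (b:ℕ)) :=
      fun a b => hj.lt_iff_lt.trans Fin.lt_def
    rw [hv]
    simp only [Matrix.mulVec_single_one, Matrix.col_apply, single_dotProduct, one_mul, mul_one]
    simp only [moebiusA, hlt]
  have hB_sum : ∀ (c : Fin (k+1) → F) (a : Fin (k+1)),
      v a ⬝ᵥ moebiusA F n *ᵥ (∑ i : Fin (k+1), c i • v i)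
        = ∑ i : Fin (k+1), c i * (v a ⬝ᵥ moebiusA F n *ᵥ v i) := by
    intro c a
    rw [show moebiusA F n *ᵥ (∑ i : Fin (k+1), c i • v i)
          = ∑ i : Fin (k+1), c i • (moebiusA F n *ᵥ v i) by
      simp only [← Matrix.mulVecLin_apply, map_sum, _root_.map_smul]]
    simp only [dotProduct, Finset.sum_apply, Pi.smul_apply, smul_eq_mul, Finset.mul_sum]
    rw [Finset.sum_comm]
    exact Finset.sum_congr rfl fun i _ => Finset.sum_congr rfl fun p _ => by ring
  have hvS : ∀ i, v i ∈ S := fun i => hS ▸ Submodule.subset_span ⟨i, rfl⟩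
  have hwS : w ∈ S := Submodule.sum_mem _ fun i _ => Submodule.smul_mem _ _ (hvS i)
  have hBw : ∀ a : Fin (k+1), v a ⬝ᵥ moebiusA F n *ᵥ w = 0 := by
    intro a
    rw [hw, hB_sum]
    calc ∑ i : Fin (k+1), (-1:F)^((i:ℕ)+1) * (v a ⬝ᵥ moebiusA F n *ᵥ v i)
        = ∑ i : Fin (k+1),
            (if (a:ℕ) < (i:ℕ) then (-1:F) else if (i:ℕ) < (a:ℕ) then 1 else 0)
              * (-1)^((i:ℕ)+1) := by
          refine Finset.sum_congr rfl fun i _ => ?_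
          rw [hBvv]; ring
      _ = ∑ b ∈ Finset.range (k+1),
            (if (a:ℕ) < b then (-1:F) else if b < (a:ℕ) then 1 else 0) * (-1)^(b+1) :=
          Fin.sum_univ_eq_sum_range
            (fun b => (if (a:ℕ) < b then (-1:F) else if b < (a:ℕ) then 1 else 0) * (-1)^(b+1))
            (k+1)
      _ = 0 := aux_sum_chi F k (a:ℕ) hk (by omega)
  ext y
  simp only [Set.mem_setOf_eq, SetLike.mem_coe]
  constructor
  · rintro ⟨hyS, hyB⟩
    rw [hS, Submodule.mem_span_range_iff_exists_fun] at hyS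
    obtain ⟨c, hc⟩ := hyS
    have hE : ∀ a : Fin (k+1),
        ∑ i : Fin (k+1), c i *
          (if (a:ℕ) < (i:ℕ) then (-1:F) else if (i:ℕ) < (a:ℕ) then 1 else 0) = 0 := by
      intro a
      have h0 := hyB (v a) (hvS a)
      rw [← hc, hB_sum] at h0
      calc ∑ i : Fin (k+1), c i *
            (if (a:ℕ) < (i:ℕ) then (-1:F) else if (i:ℕ) < (a:ℕ) then 1 else 0)
          = ∑ i : Fin (k+1), c i * (v a ⬝ᵥ moebiusA F n *ᵥ v i) :=
            Finset.sum_congr rfl fun i _ => by rw [hBvv]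
        _ = 0 := h0
    have hrec : ∀ m (hm : m < k), c ⟨m+1, by omega⟩ = - c ⟨m, by omega⟩ := by
      intro m hm
      have e1 := hE ⟨m, by omega⟩
      have e2 := hE ⟨m+1, by omega⟩
      simp only at e1 e2
      have kdiff : ∑ i : Fin (k+1),
          (c i * (if m+1 < (i:ℕ) then (-1:F) else if (i:ℕ) < m+1 then 1 else 0)
            - c i * (if m < (i:ℕ) then (-1:F) else if (i:ℕ) < m then 1 else 0)) = 0 := by
        rw [Finset.sum_sub_distrib, e2, e1, sub_zero]
      have hpt : ∀ i : Fin (k+1),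
          c i * (if m+1 < (i:ℕ) then (-1:F) else if (i:ℕ) < m+1 then 1 else 0)
            - c i * (if m < (i:ℕ) then (-1:F) else if (i:ℕ) < m then 1 else 0)
          = c i * (if i = (⟨m, by omega⟩ : Fin (k+1)) then 1 else 0)
            + c i * (if i = (⟨m+1, by omega⟩ : Fin (k+1)) then 1 else 0) := by
        intro i
        have hdiff : (if m+1 < (i:ℕ) then (-1:F) else if (i:ℕ) < m+1 then 1 else 0)
            - (if m < (i:ℕ) then (-1:F) else if (i:ℕ) < m then 1 else 0)
            = (if i = (⟨m, by omega⟩ : Fin (k+1)) then 1 else 0)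
              + (if i = (⟨m+1, by omega⟩ : Fin (k+1)) then 1 else 0) := by
          simp only [Fin.ext_iff]
          split_ifs <;> first | (exfalso; omega) | norm_num
        calc c i * (if m+1 < (i:ℕ) then (-1:F) else if (i:ℕ) < m+1 then 1 else 0)
              - c i * (if m < (i:ℕ) then (-1:F) else if (i:ℕ) < m then 1 else 0)
            = c i * ((if m+1 < (i:ℕ) then (-1:F) else if (i:ℕ) < m+1 then 1 else 0)
              - (if m < (i:ℕ) then (-1:F) else if (i:ℕ) < m then 1 else 0)) := by ring
          _ = _ := by rw [hdiff, mul_add]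
      have kdiff2 : ∑ i : Fin (k+1),
          (c i * (if i = (⟨m, by omega⟩ : Fin (k+1)) then (1:F) else 0)
            + c i * (if i = (⟨m+1, by omega⟩ : Fin (k+1)) then 1 else 0)) = 0 := by
        calc ∑ i : Fin (k+1),
              (c i * (if i = (⟨m, by omega⟩ : Fin (k+1)) then (1:F) else 0)
                + c i * (if i = (⟨m+1, by omega⟩ : Fin (k+1)) then 1 else 0))
            = ∑ i : Fin (k+1),
              (c i * (if m+1 < (i:ℕ) then (-1:F) else if (i:ℕ) < m+1 then 1 else 0)
                - c i * (if m < (i:ℕ) then (-1:F) else if (i:ℕ) < m then 1 else 0)) :=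
              Finset.sum_congr rfl fun i _ => (hpt i).symm
          _ = 0 := kdiff
      rw [Finset.sum_add_distrib] at kdiff2
      simp only [mul_ite, mul_one, mul_zero, Finset.sum_ite_eq', Finset.mem_univ,
        if_true] at kdiff2
      linear_combination kdiff2
    have halt : ∀ m (hm : m < k+1), c ⟨m, hm⟩ = (-1:F)^m * c ⟨0, by omega⟩ := by
      intro m
      induction m with
      | zero => intro hm; simp
      | succ p ih =>
          intro hm
          rw [hrec p (by omega), ih (by omega), pow_succ]; ring
    have hy : y = (-(c ⟨0, by omega⟩)) • w := by
      rw [← hc, hw, Finset.smul_sum]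
      refine Finset.sum_congr rfl fun i _ => ?_
      have h0 := halt (i:ℕ) i.isLt
      simp only [Fin.eta] at h0
      rw [smul_smul, h0]
      congr 1
      rw [pow_succ]; ring
    exact Submodule.mem_span_singleton.mpr ⟨-(c ⟨0, by omega⟩), hy.symm⟩
  · intro hy
    obtain ⟨d, hd⟩ := Submodule.mem_span_singleton.mp hy
    constructor
    · rw [← hd]; exact Submodule.smul_mem _ _ hwS
    · intro s hs
      rw [← hd, Matrix.mulVec_smul, dotProduct_smul]
      have hsw : s ⬝ᵥ moebiusA F n *ᵥ w = 0 := by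
        rw [hS] at hs
        induction hs using Submodule.span_induction with
        | mem x hx => obtain ⟨a, rfl⟩ := hx; exact hBw a
        | zero => rw [zero_dotProduct]
        | add x y' hx hy' ihx ihy => rw [add_dotProduct, ihx, ihy, add_zero]
        | smul t x hx ihx => rw [smul_dotProduct, ihx, smul_zero]
      rw [hsw, smul_zero]
end

section
/- Let n ≥ 3 be odd and F a field, and for each m ∈ {0,...,n} let q_m := Σ_{i=0}^{m-1} (-1)^{i+m+1} e_i + Σ_{k=m+1}^{n} (-1)^{k+m} e_k ∈ F^{n+1}. Then for all i, j ∈ {0,...,n}: the standard basis vector e_j lies in the span of { q_m : m ≠ i } if and only if i = j. Consequently, each vertex P_j = F·e_j of the simplex P is incident with exactly one hyperplanar face of the simplex Q = { F·q_0, ..., F·q_n }, namely the face spanned by { Q_m : m ≠ j }. -/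
/-- The vector `q_m = Σ_{i<m} (-1)^{i+m+1} e_i + Σ_{k>m} (-1)^{k+m} e_k`. -/
def moebiusQ (F : Type*) [Field F] (n : ℕ) (m : Fin (n + 1)) : Fin (n + 1) → F :=
  (∑ i ∈ Finset.univ.filter (fun i : Fin (n + 1) => i < m),
      ((-1 : F) ^ ((i : ℕ) + (m : ℕ) + 1)) • (Pi.single i (1 : F) : Fin (n + 1) → F)) +
  (∑ k ∈ Finset.univ.filter (fun k : Fin (n + 1) => m < k),
      ((-1 : F) ^ ((k : ℕ) + (m : ℕ))) • (Pi.single k (1 : F) : Fin (n + 1) → F))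

def msgn (a b : ℕ) : ℤ := if b < a then 1 else if a < b then -1 else 0

lemma msgn_self (a : ℕ) : msgn a a = 0 := by simp [msgn]

lemma msgn_symm (a b : ℕ) : msgn a b = - msgn b a := by
  unfold msgn
  rcases lt_trichotomy a b with h|h|h
  · simp [h, not_lt_of_gt h]
  · simp [h]
  · simp [h, not_lt_of_gt h]

lemma keyH_le {n a b : ℕ} (hodd : Odd n) (hb : b ≤ n) (hab : a ≤ b) :
    ∑ k ∈ Finset.range (n+1), msgn a k * msgn k b * (-1:ℤ)^k
      = if a = b then (-1)^a else 0 := by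
  have hn1 : Even (n+1) := Odd.add_one hodd
  rcases eq_or_lt_of_le hab with rfl | hlt
  · have hpt : ∀ k, msgn a k * msgn k a * (-1:ℤ)^k
        = -(-1:ℤ)^k + (if k = a then (-1:ℤ)^a else 0) := by
      intro k
      rcases lt_trichotomy a k with h|h|h
      · simp [msgn, h, not_lt_of_gt h, h.ne']
      · simp [msgn, h]
      · simp [msgn, h, not_lt_of_gt h, h.ne]
    rw [Finset.sum_congr rfl (fun k _ => hpt k), Finset.sum_add_distrib]
    rw [Finset.sum_ite_eq' (Finset.range (n+1)) a (fun _ => (-1:ℤ)^a)]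
    simp [neg_one_geom_sum, hn1, Finset.mem_range, Nat.lt_succ_of_le (hab.trans hb)]
  · have hane : a ≠ b := hlt.ne
    have h1 : a ≤ n + 1 := by omega
    have h2 : b ≤ n + 1 := by omega
    set f : ℕ → ℤ := fun k => msgn a k * msgn k b * (-1:ℤ)^k with hf
    have split1 : ∑ k ∈ Finset.range (n+1), f k
        = ∑ k ∈ Finset.Ico 0 a, f k + (∑ k ∈ Finset.Ico a b, f k
            + ∑ k ∈ Finset.Ico b (n+1), f k) := by
      rw [Finset.sum_Ico_consecutive f hlt.le h2,
          Finset.sum_Ico_consecutive f (Nat.zero_le a) h1, Finset.range_eq_Ico]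
    rw [split1, Finset.sum_eq_sum_Ico_succ_bot hlt f,
        Finset.sum_eq_sum_Ico_succ_bot (by omega : b < n+1) f]
    have hfa : f a = 0 := by simp [hf, msgn_self]
    have hfb : f b = 0 := by simp [hf, msgn_self]
    have e1 : ∑ k ∈ Finset.Ico 0 a, f k = ∑ k ∈ Finset.Ico 0 a, -(-1:ℤ)^k := by
      refine Finset.sum_congr rfl fun k hk => ?_
      rw [Finset.mem_Ico] at hk
      have hka : k < a := hk.2
      simp [hf, msgn, hka, not_lt_of_gt hka, not_lt_of_gt (hka.trans hlt), hka.trans hlt]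
    have e2 : ∑ k ∈ Finset.Ico (a+1) b, f k = ∑ k ∈ Finset.Ico (a+1) b, (-1:ℤ)^k := by
      refine Finset.sum_congr rfl fun k hk => ?_
      rw [Finset.mem_Ico] at hk
      have h3 : a < k := by omega
      have h4 : k < b := hk.2
      simp [hf, msgn, h3, h4, not_lt_of_gt h3, not_lt_of_gt h4]
    have e3 : ∑ k ∈ Finset.Ico (b+1) (n+1), f k
        = ∑ k ∈ Finset.Ico (b+1) (n+1), -(-1:ℤ)^k := by
      refine Finset.sum_congr rfl fun k hk => ?_
      rw [Finset.mem_Ico] at hk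
      have h3 : b < k := by omega
      have h4 : a < k := by omega
      simp [hf, msgn, h3, h4, not_lt_of_gt h3, not_lt_of_gt h4]
    rw [e1, e2, e3, Finset.sum_neg_distrib, Finset.sum_neg_distrib,
        Finset.sum_Ico_eq_sub _ (Nat.zero_le a), Finset.sum_Ico_eq_sub _ (by omega : a+1 ≤ b),
        Finset.sum_Ico_eq_sub _ (by omega : b+1 ≤ n+1)]
    simp only [neg_one_geom_sum, hn1, if_pos, Nat.even_add_one, hfa, hfb, if_neg hane]
    rcases Nat.even_or_odd a with ha|ha <;> rcases Nat.even_or_odd b with hbp|hbp <;>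
      simp only [Nat.even_iff, Nat.odd_iff] at ha hbp <;> simp [Nat.even_iff, ha, hbp] <;> ring

lemma keyH {n a b : ℕ} (hodd : Odd n) (ha : a ≤ n) (hb : b ≤ n) :
    ∑ k ∈ Finset.range (n+1), msgn a k * msgn k b * (-1:ℤ)^k
      = if a = b then (-1)^a else 0 := by
  rcases le_total a b with h | h
  · exact keyH_le hodd hb h
  · have hsym : ∑ k ∈ Finset.range (n+1), msgn a k * msgn k b * (-1:ℤ)^k
        = ∑ k ∈ Finset.range (n+1), msgn b k * msgn k a * (-1:ℤ)^k := by
      refine Finset.sum_congr rfl fun k _ => ?_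
      rw [msgn_symm a k, msgn_symm k b]; ring
    rw [hsym, keyH_le hodd ha h]
    by_cases hab : a = b
    · subst hab; simp
    · simp [hab, Ne.symm hab]

lemma moebiusQ_apply (F : Type*) [Field F] (n : ℕ) (m t : Fin (n + 1)) :
    moebiusQ F n m t = ((msgn (t : ℕ) (m : ℕ) * (-1:ℤ)^((t:ℕ)+(m:ℕ)) : ℤ) : F) := by
  unfold moebiusQ
  simp only [Pi.add_apply, Finset.sum_apply, Pi.smul_apply, Pi.single_apply, smul_eq_mul,
    mul_ite, mul_one, mul_zero, Finset.sum_ite_eq, Finset.sum_ite_eq', Finset.mem_filter, Finset.mem_univ, true_and]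
  rcases lt_trichotomy t m with h | h | h
  · have hv : (t:ℕ) < (m:ℕ) := h
    rw [if_pos h, if_neg (not_lt_of_gt h)]
    simp [msgn, hv, not_lt_of_gt hv]
    push_cast
    ring
  · subst h
    simp [msgn]
  · have hv : (m:ℕ) < (t:ℕ) := h
    rw [if_neg (not_lt_of_gt h), if_pos h]
    simp [msgn, hv]

theorem stmt_6 (F : Type*) [Field F] (n : ℕ) (hn : 3 ≤ n) (hodd : Odd n) :
    ∀ i j : Fin (n + 1),
      ((Pi.single j (1 : F) : Fin (n + 1) → F) ∈
        Submodule.span F {v | ∃ m : Fin (n + 1), m ≠ i ∧ v = moebiusQ F n m}) ↔ i = j := by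
  intro i j
  constructor
  · -- forward
    intro hmem
    by_contra hij
    set L : (Fin (n+1) → F) →ₗ[F] F :=
      ∑ t : Fin (n+1), ((msgn (i:ℕ) (t:ℕ) : ℤ) : F) • LinearMap.proj t with hL
    have hLapp : ∀ x : Fin (n+1) → F,
        L x = ∑ t : Fin (n+1), ((msgn (i:ℕ) (t:ℕ) : ℤ) : F) * x t := by
      intro x
      simp [hL, LinearMap.sum_apply, LinearMap.proj_apply, smul_eq_mul]
    have hker : Submodule.span F {v | ∃ m : Fin (n+1), m ≠ i ∧ v = moebiusQ F n m}
        ≤ LinearMap.ker L := by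
      rw [Submodule.span_le]
      rintro v ⟨m, hm, rfl⟩
      have hmi : (i:ℕ) ≠ (m:ℕ) := fun h => hm (Fin.val_injective h.symm)
      simp only [SetLike.mem_coe, LinearMap.mem_ker]
      rw [hLapp]
      have step : ∀ t : Fin (n+1), ((msgn (i:ℕ) (t:ℕ) : ℤ):F) * moebiusQ F n m t
          = (((msgn (i:ℕ) (t:ℕ) * (msgn (t:ℕ) (m:ℕ) * (-1:ℤ)^((t:ℕ)+(m:ℕ)))) : ℤ) : F) := by
        intro t; rw [moebiusQ_apply]; push_cast; ring
      rw [Finset.sum_congr rfl (fun t _ => step t), ← Int.cast_sum,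
        Fin.sum_univ_eq_sum_range
          (fun k => msgn (i:ℕ) k * (msgn k (m:ℕ) * (-1:ℤ)^(k+(m:ℕ)))) (n+1)]
      have pull : ∑ k ∈ Finset.range (n+1), msgn (i:ℕ) k * (msgn k (m:ℕ) * (-1:ℤ)^(k+(m:ℕ)))
          = (-1:ℤ)^(m:ℕ) * ∑ k ∈ Finset.range (n+1), msgn (i:ℕ) k * msgn k (m:ℕ) * (-1:ℤ)^k := by
        rw [Finset.mul_sum]
        refine Finset.sum_congr rfl fun k _ => ?_
        rw [pow_add]; ring
      rw [pull, keyH hodd i.is_le m.is_le, if_neg hmi, mul_zero, Int.cast_zero]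
    have h0 : L (Pi.single j (1:F)) = 0 := hker hmem
    rw [hLapp] at h0
    simp only [Pi.single_apply, mul_ite, mul_one, mul_zero, Finset.sum_ite_eq',
      Finset.mem_univ, if_pos] at h0
    have hij' : (i:ℕ) ≠ (j:ℕ) := fun h => hij (Fin.val_injective h)
    rcases lt_or_gt_of_ne hij' with h | h
    · rw [show msgn (i:ℕ) (j:ℕ) = -1 by simp [msgn, h, not_lt_of_gt h]] at h0
      simp at h0
    · rw [show msgn (i:ℕ) (j:ℕ) = 1 by simp [msgn, h]] at h0
      simp at h0
  · -- backward
    rintro rfl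
    have hrep : (Pi.single i (1:F) : Fin (n+1) → F)
        = ∑ m : Fin (n+1), ((msgn (m:ℕ) (i:ℕ) : ℤ):F) • moebiusQ F n m := by
      funext t
      rw [Finset.sum_apply]
      simp only [Pi.smul_apply, smul_eq_mul]
      have step : ∀ m : Fin (n+1), ((msgn (m:ℕ) (i:ℕ) : ℤ):F) * moebiusQ F n m t
          = (((msgn (m:ℕ) (i:ℕ) * (msgn (t:ℕ) (m:ℕ) * (-1:ℤ)^((t:ℕ)+(m:ℕ)))) : ℤ):F) := by
        intro m; rw [moebiusQ_apply]; push_cast; ring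
      rw [Finset.sum_congr rfl (fun m _ => step m), ← Int.cast_sum,
        Fin.sum_univ_eq_sum_range
          (fun k => msgn k (i:ℕ) * (msgn (t:ℕ) k * (-1:ℤ)^((t:ℕ)+k))) (n+1)]
      have pull : ∑ k ∈ Finset.range (n+1), msgn k (i:ℕ) * (msgn (t:ℕ) k * (-1:ℤ)^((t:ℕ)+k))
          = (-1:ℤ)^(t:ℕ) * ∑ k ∈ Finset.range (n+1), msgn (t:ℕ) k * msgn k (i:ℕ) * (-1:ℤ)^k := by
        rw [Finset.mul_sum]
        refine Finset.sum_congr rfl fun k _ => ?_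
        rw [pow_add]; ring
      rw [pull, keyH hodd t.is_le i.is_le]
      by_cases hti : (t:ℕ) = (i:ℕ)
      · have ht : t = i := Fin.val_injective hti
        have hone : (-1:ℤ)^(t:ℕ) * (-1:ℤ)^(t:ℕ) = 1 := by
          rw [← pow_add]; exact Even.neg_one_pow ⟨(t:ℕ), rfl⟩
        rw [if_pos hti, hone]
        simp [ht, Pi.single_apply]
      · have hne : t ≠ i := fun h => hti (congrArg Fin.val h)
        rw [if_neg hti, mul_zero, Int.cast_zero]
        simp [Pi.single_apply, hne]
    rw [hrep]
    apply Submodule.sum_mem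
    intro m _
    by_cases hmi : m = i
    · subst hmi
      simp [msgn_self]
    · exact Submodule.smul_mem _ _ (Submodule.subset_span ⟨m, hmi, rfl⟩)
end

section
/- Consider the six 8×8 complex matrices σ_y⊗σ_z⊗σ_z, σ_x⊗σ_z⊗σ_z, σ_0⊗σ_y⊗σ_z, σ_0⊗σ_x⊗σ_z, σ_0⊗σ_0⊗σ_y, σ_0⊗σ_0⊗σ_x. Then any two distinct matrices among these six do not commute. -/
open Matrix Kronecker Complex

/-- The Pauli matrices `σ_0, σ_x, σ_y, σ_z` (indexed by `0, 1, 2, 3`). -/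
def pauli : Fin 4 → Matrix (Fin 2) (Fin 2) ℂ :=
  ![1, !![0, 1; 1, 0], !![0, -I; I, 0], !![1, 0; 0, -1]]

/-- The three-fold Kronecker product `σ_β ⊗ σ_γ ⊗ σ_δ`. -/
def pauli3 (β γ δ : Fin 4) :
    Matrix (Fin 2 × Fin 2 × Fin 2) (Fin 2 × Fin 2 × Fin 2) ℂ :=
  pauli β ⊗ₖ (pauli γ ⊗ₖ pauli δ)
/-- The six operators `X_0,…,X_5` representing the first simplex `P` of the Möbius pair:
`σ_x⊗σ_0⊗σ_0, σ_y⊗σ_0⊗σ_0, σ_z⊗σ_x⊗σ_0, σ_z⊗σ_y⊗σ_0, σ_z⊗σ_z⊗σ_x, σ_z⊗σ_z⊗σ_y`. -/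
def Xop : Fin 6 → Matrix (Fin 2 × Fin 2 × Fin 2) (Fin 2 × Fin 2 × Fin 2) ℂ :=
  ![pauli3 1 0 0, pauli3 2 0 0, pauli3 3 1 0, pauli3 3 2 0, pauli3 3 3 1, pauli3 3 3 2]

/-- The six operators `Y_0,…,Y_5` representing the second simplex `Q` of the Möbius pair:
`σ_y⊗σ_z⊗σ_z, σ_x⊗σ_z⊗σ_z, σ_0⊗σ_y⊗σ_z, σ_0⊗σ_x⊗σ_z, σ_0⊗σ_0⊗σ_y, σ_0⊗σ_0⊗σ_x`. -/
def Yop : Fin 6 → Matrix (Fin 2 × Fin 2 × Fin 2) (Fin 2 × Fin 2 × Fin 2) ℂ :=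
  ![pauli3 2 3 3, pauli3 1 3 3, pauli3 0 2 3, pauli3 0 1 3, pauli3 0 0 2, pauli3 0 0 1]

lemma psq (k : Fin 4) : pauli k * pauli k = 1 := by
  fin_cases k <;> (ext i j; fin_cases i <;> fin_cases j <;>
    simp [pauli, Matrix.mul_apply, Fin.sum_univ_two, Matrix.one_apply])

lemma p3sq (a b c : Fin 4) : pauli3 a b c * pauli3 a b c = 1 := by
  rw [pauli3, ← Matrix.mul_kronecker_mul, ← Matrix.mul_kronecker_mul, psq, psq, psq,
    Matrix.one_kronecker_one, Matrix.one_kronecker_one]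

lemma p0 : pauli 0 = 1 := rfl

lemma panti {a b : Fin 4} (ha : a ≠ 0) (hb : b ≠ 0) (hab : a ≠ b) :
    pauli a * pauli b = -(pauli b * pauli a) := by
  fin_cases a <;> fin_cases b <;> simp_all <;>
    (ext i j; fin_cases i <;> fin_cases j <;>
      simp [pauli, Matrix.mul_apply, Fin.sum_univ_two] <;> ring_nf)

lemma pcomm {a b : Fin 4} (h : a = 0 ∨ b = 0 ∨ a = b) :
    pauli a * pauli b = pauli b * pauli a := by
  rcases h with h | h | h <;> subst h <;> simp [p0]

lemma neg_kron {l m n p : Type*} (A : Matrix l m ℂ) (B : Matrix n p ℂ) :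
    (-A) ⊗ₖ B = -(A ⊗ₖ B) := by
  ext ⟨i, k⟩ ⟨j, l⟩; simp [Matrix.kroneckerMap_apply]

lemma kron_neg {l m n p : Type*} (A : Matrix l m ℂ) (B : Matrix n p ℂ) :
    A ⊗ₖ (-B) = -(A ⊗ₖ B) := by
  ext ⟨i, k⟩ ⟨j, l⟩; simp [Matrix.kroneckerMap_apply]

section
variable {A B C D E F : Matrix (Fin 2) (Fin 2) ℂ}

lemma anti_fst (h1 : A * D = -(D * A)) (h2 : B * E = E * B) (h3 : C * F = F * C) :
    (A ⊗ₖ (B ⊗ₖ C)) * (D ⊗ₖ (E ⊗ₖ F)) = -((D ⊗ₖ (E ⊗ₖ F)) * (A ⊗ₖ (B ⊗ₖ C))) := by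
  rw [← Matrix.mul_kronecker_mul, ← Matrix.mul_kronecker_mul,
      ← Matrix.mul_kronecker_mul, ← Matrix.mul_kronecker_mul, h1, h2, h3,
      neg_kron]

lemma anti_snd (h1 : A * D = D * A) (h2 : B * E = -(E * B)) (h3 : C * F = F * C) :
    (A ⊗ₖ (B ⊗ₖ C)) * (D ⊗ₖ (E ⊗ₖ F)) = -((D ⊗ₖ (E ⊗ₖ F)) * (A ⊗ₖ (B ⊗ₖ C))) := by
  rw [← Matrix.mul_kronecker_mul, ← Matrix.mul_kronecker_mul,
      ← Matrix.mul_kronecker_mul, ← Matrix.mul_kronecker_mul, h1, h2, h3,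
      neg_kron, kron_neg]

lemma anti_trd (h1 : A * D = D * A) (h2 : B * E = E * B) (h3 : C * F = -(F * C)) :
    (A ⊗ₖ (B ⊗ₖ C)) * (D ⊗ₖ (E ⊗ₖ F)) = -((D ⊗ₖ (E ⊗ₖ F)) * (A ⊗ₖ (B ⊗ₖ C))) := by
  rw [← Matrix.mul_kronecker_mul, ← Matrix.mul_kronecker_mul,
      ← Matrix.mul_kronecker_mul, ← Matrix.mul_kronecker_mul, h1, h2, h3,
      kron_neg, kron_neg]
end

lemma p3anti_fst {a d : Fin 4} (b c e f : Fin 4) (h : pauli a * pauli d = -(pauli d * pauli a))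
    (h2 : b = 0 ∨ e = 0 ∨ b = e) (h3 : c = 0 ∨ f = 0 ∨ c = f) :
    pauli3 a b c * pauli3 d e f = -(pauli3 d e f * pauli3 a b c) :=
  anti_fst h (pcomm h2) (pcomm h3)

lemma p3anti_snd {b e : Fin 4} (a c d f : Fin 4) (h : pauli b * pauli e = -(pauli e * pauli b))
    (h1 : a = 0 ∨ d = 0 ∨ a = d) (h3 : c = 0 ∨ f = 0 ∨ c = f) :
    pauli3 a b c * pauli3 d e f = -(pauli3 d e f * pauli3 a b c) :=
  anti_snd (pcomm h1) h (pcomm h3)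

lemma p3anti_trd {c f : Fin 4} (a b d e : Fin 4) (h : pauli c * pauli f = -(pauli f * pauli c))
    (h1 : a = 0 ∨ d = 0 ∨ a = d) (h2 : b = 0 ∨ e = 0 ∨ b = e) :
    pauli3 a b c * pauli3 d e f = -(pauli3 d e f * pauli3 a b c) :=
  anti_trd (pcomm h1) (pcomm h2) h

lemma Yanti : ∀ i j : Fin 6, i ≠ j → Yop i * Yop j = -(Yop j * Yop i) := by
  have sym : ∀ {X Y : Matrix (Fin 2 × Fin 2 × Fin 2) (Fin 2 × Fin 2 × Fin 2) ℂ},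
      X * Y = -(Y * X) → Y * X = -(X * Y) := fun h => by rw [h, neg_neg]
  intro i j hij
  fin_cases i <;> fin_cases j <;> simp only [Yop, Fin.isValue, Matrix.cons_val_zero,
    Matrix.cons_val_one, Matrix.head_cons, Matrix.cons_val_fin_one, Matrix.head_fin_const] <;>
  first
  | exact absurd rfl hij
  | exact p3anti_fst _ _ _ _ (panti (by decide) (by decide) (by decide)) (by decide) (by decide)
  | exact p3anti_snd _ _ _ _ (panti (by decide) (by decide) (by decide)) (by decide) (by decide)
  | exact p3anti_trd _ _ _ _ (panti (by decide) (by decide) (by decide)) (by decide) (by decide)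
  | exact sym (p3anti_fst _ _ _ _ (panti (by decide) (by decide) (by decide)) (by decide) (by decide))
  | exact sym (p3anti_snd _ _ _ _ (panti (by decide) (by decide) (by decide)) (by decide) (by decide))
  | exact sym (p3anti_trd _ _ _ _ (panti (by decide) (by decide) (by decide)) (by decide) (by decide))

lemma Ysq (i : Fin 6) : Yop i * Yop i = 1 := by
  fin_cases i <;> exact p3sq _ _ _

theorem stmt_16 : ∀ i j : Fin 6, i ≠ j → Yop i * Yop j ≠ Yop j * Yop i := by
  intro i j hij h
  have ha := Yanti i j hij
  rw [h] at ha
  have h0 : Yop j * Yop i = 0 := by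
    have h2 : Yop j * Yop i + Yop j * Yop i = 0 := by nth_rewrite 1 [ha]; simp
    rw [← two_smul ℂ] at h2
    exact (smul_eq_zero.mp h2).resolve_left two_ne_zero
  have : (1 : Matrix (Fin 2 × Fin 2 × Fin 2) (Fin 2 × Fin 2 × Fin 2) ℂ) = 0 := by
    calc (1 : Matrix (Fin 2 × Fin 2 × Fin 2) (Fin 2 × Fin 2 × Fin 2) ℂ)
        = Yop j * Yop j := (Ysq j).symm
      _ = Yop j * (Yop i * Yop i) * Yop j := by rw [Ysq i, mul_one]
      _ = (Yop j * Yop i) * (Yop i * Yop j) := by noncomm_ring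
      _ = 0 := by rw [h0, zero_mul]
  exact one_ne_zero this
end
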